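/- arXiv:2604.10062 — 2 statements merged into one kernel-verified Lean document; each statement's English description precedes it below -/
import Mathlib

section
/- Let φ₁,…,φ_T ∈ ℝᵈ with ‖φ_t‖₂ ≤ 1 for all t, let λ ≥ 1, and define Λ_t = λI + Σ_{τ<t} φ_τφ_τᵀ. Then Σ_{t=1}^{T} min(1, ‖φ_t‖²_{Λ_t⁻¹}) ≤ 2 log( det(Λ_{T+1}) / det(λI) ) ≤ 2d log(1 + T/λ). -/
/-!
By the matrix determinant lemma, `det Λ_{t+1} = det Λ_t · (1 + ‖φ_t‖²_{Λ_t⁻¹})`, so the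
determinant ratio telescopes to `∏_t (1 + ‖φ_t‖²_{Λ_t⁻¹})`, and `min 1 x ≤ 2 log (1 + x)`
gives the first inequality. For the second, `‖φ_τ‖ ≤ 1` means `φ_τ φ_τᵀ ≤ 1` in the Loewner
order, so `Λ_T ≤ (λ + T) I`; every eigenvalue of `Λ_T` is then at most `λ + T`.
-/

open Matrix Finset
open scoped MatrixOrder

theorem Real.min_one_le_two_mul_log_one_add {x : ℝ} (hx : 0 ≤ x) :
    min 1 x ≤ 2 * Real.log (1 + x) :=
  calc min 1 x ≤ 2 * (2 * x / (x + 2)) := by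
        rw [mul_div_assoc', le_div_iff₀ (by positivity)]
        rcases le_total x 1 with h | h
        · nlinarith [min_le_right 1 x]
        · nlinarith [min_le_left 1 x]
    _ ≤ 2 * Real.log (1 + x) := by gcongr; exact Real.le_log_one_add_of_nonneg hx

namespace Matrix

variable {n : Type*} [Fintype n]

theorem det_add_vecMulVec [DecidableEq n] {R : Type*} [CommRing R] {A : Matrix n n R}
    (hA : IsUnit A.det) (u v : n → R) :
    (A + vecMulVec u v).det = A.det * (1 + v ⬝ᵥ (A⁻¹ *ᵥ u)) := by
  rw [vecMulVec_eq Unit, det_add_replicateCol_mul_replicateRow hA, Matrix.mul_assoc,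
    ← replicateCol_mulVec]
  congr 1
  simp

theorem det_eq_det_zero_mul_prod_of_add_vecMulVec [DecidableEq n] {R : Type*} [CommRing R]
    {A : ℕ → Matrix n n R} {u v : ℕ → n → R}
    (hA : ∀ t, A (t + 1) = A t + vecMulVec (u t) (v t)) (hdet : ∀ t, IsUnit (A t).det)
    (T : ℕ) : (A T).det = (A 0).det * ∏ t ∈ range T, (1 + v t ⬝ᵥ ((A t)⁻¹ *ᵥ u t)) := by
  induction T with
  | zero => simp
  | succ T ih => rw [hA, det_add_vecMulVec (hdet T), ih, prod_range_succ, mul_assoc]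

theorem posSemidef_vecMulVec_self (x : n → ℝ) : (vecMulVec x x).PosSemidef := by
  simpa using posSemidef_vecMulVec_self_star x

theorem posDef_of_add_vecMulVec {Λ : ℕ → Matrix n n ℝ} {φ : ℕ → n → ℝ}
    (hΛ : ∀ t, Λ (t + 1) = Λ t + vecMulVec (φ t) (φ t)) (hΛ₀ : (Λ 0).PosDef) (t : ℕ) :
    (Λ t).PosDef := by
  induction t with
  | zero => exact hΛ₀
  | succ t ih => rw [hΛ]; exact ih.add_posSemidef (posSemidef_vecMulVec_self _)

theorem vecMulVec_self_le_one [DecidableEq n] {x : n → ℝ} (hx : x ⬝ᵥ x ≤ 1) :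
    vecMulVec x x ≤ 1 := by
  rw [le_iff, posSemidef_iff_dotProduct_mulVec]
  refine ⟨isHermitian_one.sub (posSemidef_vecMulVec_self x).isHermitian, fun y ↦ ?_⟩
  have hy : 0 ≤ y ⬝ᵥ y := by simpa using dotProduct_star_self_nonneg y
  have cauchy_schwarz : (x ⬝ᵥ y) ^ 2 ≤ (x ⬝ᵥ x) * (y ⬝ᵥ y) := by
    simpa [dotProduct, pow_two] using sum_mul_sq_le_sq_mul_sq univ x y
  simp only [star_trivial, sub_mulVec, one_mulVec, dotProduct_sub, vecMulVec_mulVec,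
    MulOpposite.smul_eq_mul_unop, MulOpposite.unop_op, dotProduct_smul,
    dotProduct_comm y x, sub_nonneg]
  nlinarith

variable [DecidableEq n]

theorem IsHermitian.eigenvalues_le {M : Matrix n n ℝ} (hM : M.IsHermitian) {c : ℝ}
    (h : M ≤ c • 1) (i : n) : hM.eigenvalues i ≤ c := by
  set v : n → ℝ := ⇑(hM.eigenvectorBasis i)
  have hv : v ⬝ᵥ v = 1 := by
    have := hM.eigenvectorBasis.inner_eq_one i
    rwa [EuclideanSpace.inner_eq_star_dotProduct, star_trivial] at this
  have := (le_iff.mp h).dotProduct_mulVec_nonneg v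
  rw [hM.eigenvalues_eq i]
  simpa [sub_mulVec, dotProduct_sub, smul_mulVec, hv] using this

theorem det_le_pow_of_le_smul_one {M : Matrix n n ℝ} (hM : 0 ≤ M) {c : ℝ} (h : M ≤ c • 1) :
    M.det ≤ c ^ Fintype.card n := by
  have hM' := nonneg_iff_posSemidef.mp hM
  rw [hM'.isHermitian.det_eq_prod_eigenvalues, ← card_univ, ← prod_const]
  simp only [RCLike.ofReal_real_eq_id, id]
  exact prod_le_prod (fun i _ ↦ hM'.eigenvalues_nonneg i)
    fun i _ ↦ hM'.isHermitian.eigenvalues_le h i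

theorem smul_one_add_sum_vecMulVec_le {ι : Type*} (s : Finset ι) (lam : ℝ) {x : ι → n → ℝ}
    (hx : ∀ i, x i ⬝ᵥ x i ≤ 1) :
    lam • (1 : Matrix n n ℝ) + ∑ i ∈ s, vecMulVec (x i) (x i) ≤ (lam + #s) • 1 := by
  calc lam • (1 : Matrix n n ℝ) + ∑ i ∈ s, vecMulVec (x i) (x i)
      ≤ lam • 1 + ∑ _i ∈ s, 1 := by gcongr with i; exact vecMulVec_self_le_one (hx i)
    _ = (lam + #s) • 1 := by rw [sum_const, add_smul, Nat.cast_smul_eq_nsmul]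

theorem sum_min_one_le_two_mul_log_det_div {Λ : ℕ → Matrix n n ℝ} {φ : ℕ → n → ℝ}
    (hΛ : ∀ t, Λ (t + 1) = Λ t + vecMulVec (φ t) (φ t)) (hpos : ∀ t, (Λ t).PosDef) (T : ℕ) :
    ∑ t ∈ range T, min 1 (φ t ⬝ᵥ ((Λ t)⁻¹ *ᵥ φ t)) ≤
      2 * Real.log ((Λ T).det / (Λ 0).det) := by
  have hq : ∀ t, 0 ≤ φ t ⬝ᵥ ((Λ t)⁻¹ *ᵥ φ t) := fun t ↦ by
    simpa using (hpos t).posSemidef.inv.dotProduct_mulVec_nonneg (φ t)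
  have hratio : (Λ T).det / (Λ 0).det = ∏ t ∈ range T, (1 + φ t ⬝ᵥ ((Λ t)⁻¹ *ᵥ φ t)) := by
    rw [det_eq_det_zero_mul_prod_of_add_vecMulVec hΛ (fun t ↦ (hpos t).det_pos.ne'.isUnit) T,
      mul_div_cancel_left₀ _ (hpos 0).det_pos.ne']
  rw [hratio, Real.log_prod fun t _ ↦ by linarith [hq t], mul_sum]
  exact sum_le_sum fun t _ ↦ Real.min_one_le_two_mul_log_one_add (hq t)

end Matrix

/-- Elliptic potential lemma: for `φ₀, …, φ_{T-1} ∈ ℝᵈ` with `‖φ_t‖₂ ≤ 1`, `λ ≥ 1`, and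
`Λ_t = λI + Σ_{τ<t} φ_τ φ_τᵀ`,
`Σ_{t<T} min(1, ‖φ_t‖²_{Λ_t⁻¹}) ≤ 2 log(det(Λ_T)/det(λI)) ≤ 2d log(1 + T/λ)`. -/
theorem stmt_10 {d : ℕ} (T : ℕ) (lam : ℝ) (hlam : 1 ≤ lam)
    (φ : ℕ → (Fin d → ℝ)) (hφ : ∀ t, φ t ⬝ᵥ φ t ≤ 1)
    (Λ : ℕ → Matrix (Fin d) (Fin d) ℝ)
    (hΛ : ∀ t, Λ t = lam • (1 : Matrix (Fin d) (Fin d) ℝ) +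
      ∑ τ ∈ Finset.range t, Matrix.vecMulVec (φ τ) (φ τ)) :
    (∑ t ∈ Finset.range T, min 1 (φ t ⬝ᵥ ((Λ t)⁻¹ *ᵥ φ t)) ≤
        2 * Real.log ((Λ T).det / (lam • (1 : Matrix (Fin d) (Fin d) ℝ)).det)) ∧
      2 * Real.log ((Λ T).det / (lam • (1 : Matrix (Fin d) (Fin d) ℝ)).det) ≤
        2 * d * Real.log (1 + T / lam) := by
  have hlam₀ : 0 < lam := zero_lt_one.trans_le hlam
  have hΛ₀ : Λ 0 = lam • 1 := by simpa using hΛ 0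
  have hΛsucc : ∀ t, Λ (t + 1) = Λ t + vecMulVec (φ t) (φ t) := fun t ↦ by
    rw [hΛ, hΛ, sum_range_succ, add_assoc]
  have hpos := posDef_of_add_vecMulVec hΛsucc (hΛ₀ ▸ PosDef.one.smul hlam₀)
  refine ⟨hΛ₀ ▸ sum_min_one_le_two_mul_log_det_div hΛsucc hpos T, ?_⟩
  have hle : Λ T ≤ (lam + T) • 1 := by
    simpa [hΛ T] using smul_one_add_sum_vecMulVec_le (range T) lam hφ
  have hdet : (Λ T).det ≤ (lam + T) ^ d := by
    simpa using det_le_pow_of_le_smul_one (nonneg_iff_posSemidef.mpr (hpos T).posSemidef) hle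
  have hdet_ratio : (Λ T).det / lam ^ d ≤ (1 + T / lam) ^ d := by
    rw [div_le_iff₀ (by positivity), ← mul_pow, add_mul, div_mul_cancel₀ _ hlam₀.ne', one_mul]
    linarith
  rw [det_smul, det_one, mul_one, Fintype.card_fin]
  calc 2 * Real.log ((Λ T).det / lam ^ d)
      ≤ 2 * Real.log ((1 + T / lam) ^ d) := by
        gcongr
        exact div_pos (hpos T).det_pos (by positivity)
    _ = 2 * d * Real.log (1 + T / lam) := by rw [Real.log_pow]; ring
end

section
/- Let ε₂* > 0 and suppose for every stage h, certified state s, and non-target action a: ⟨φ_h(s,a), u_h⟩ ≥ g_h(s,a) + ε₂*, where g_h(s,a) ≥ Q_h^{π†,r}(s,a) − Q_h^{π†,r}(s,π†(s)). Define r̄_h(s,a) = r_h(s,a) for a = π†(s) and r̄_h(s,a) ≤ r_h(s,a) − ⟨φ_h(s,a),u_h⟩ otherwise, with the continuation values of π† unchanged between r and r̄ on the target branch. Then Q_h^{π†,r̄}(s,π†(s)) − Q_h^{π†,r̄}(s,a) ≥ ε₂* for all certified s and a ≠ π†(s). -/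
open Matrix

/-- Stage-2 certified local gap: if for every stage `h`, certified state `s`, and
non-target action `a`, the penalty satisfies `⟨φ_h(s,a),u_h⟩ ≥ g_h(s,a) + ε₂*` with
`g_h(s,a) ≥ Q_h^{π†,r}(s,a) − Q_h^{π†,r}(s,π†(s))`, the penalized reward `r̄` keeps target
rewards unchanged and lowers non-target rewards by at least the penalty, and the
continuation values of `π†` are unchanged between `r` and `r̄` (both Q-functions share the
same continuation term `cont`), then
`Q_h^{π†,r̄}(s,π†(s)) − Q_h^{π†,r̄}(s,a) ≥ ε₂*` for all certified `s` and `a ≠ π†(s)`. -/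
theorem stmt_16 {d : ℕ} {St Ac : Type*}
    (ε₂ : ℝ) (hε₂ : 0 < ε₂)
    (πd : ℕ → St → Ac)
    (φ : ℕ → St → Ac → (Fin d → ℝ)) (u : ℕ → (Fin d → ℝ))
    (C : ℕ → St → Prop)
    (r rbar : ℕ → St → Ac → ℝ) (g : ℕ → St → Ac → ℝ)
    (Qr Qrbar : ℕ → St → Ac → ℝ) (cont : ℕ → St → Ac → ℝ)
    -- Q-functions of π† under r and r̄ share the same continuation term:
    (hQr : ∀ h s a, Qr h s a = r h s a + cont h s a)
    (hQrbar : ∀ h s a, Qrbar h s a = rbar h s a + cont h s a)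
    -- penalty dominates the (estimated) clean disadvantage with margin ε₂*:
    (hpen : ∀ h s a, C h s → a ≠ πd h s → φ h s a ⬝ᵥ u h ≥ g h s a + ε₂)
    (hg : ∀ h s a, C h s → a ≠ πd h s →
      g h s a ≥ Qr h s a - Qr h s (πd h s))
    -- penalized reward: unchanged on the target branch, lowered elsewhere:
    (hrbar_tar : ∀ h s, C h s → rbar h s (πd h s) = r h s (πd h s))
    (hrbar_pen : ∀ h s a, C h s → a ≠ πd h s →
      rbar h s a ≤ r h s a - φ h s a ⬝ᵥ u h) :
    ∀ h s a, C h s → a ≠ πd h s →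
      Qrbar h s (πd h s) - Qrbar h s a ≥ ε₂ := by
  intro h s a hC hne
  have h1 := hpen h s a hC hne
  have h2 := hg h s a hC hne
  have h3 := hrbar_pen h s a hC hne
  have h4 := hrbar_tar h s hC
  rw [hQrbar, hQrbar, h4]
  have hq1 := hQr h s a
  have hq2 := hQr h s (πd h s)
  linarith
end
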